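/- (Stability of supersolutions under monotone increasing limits.) For each n ≥ 1 and each i ∈ 𝓘 let v^{i,n} : ℝ^k → ℝ be continuous, with v^{i,n} ≤ v^{i,n+1} pointwise and with a uniform polynomial growth bound |v^{i,n}(x)| ≤ C(1 + |x|^γ) independent of n. Assume that for each n ≥ 1, the m-tuple (v^{1,n},…,v^{m,n}) is a viscosity supersolution of the decoupled system (S_n): for each i, min{ v^{i,n}(x) − max_{j≠i}( v^{j,n}(x) − g_ij(x) ), r v^{i,n}(x) − ⟨b(x), D_x v^{i,n}(x)⟩ − ½Tr[(σσᵀ)(x) D²_x v^{i,n}(x)] − f_i(x, v^{1,n−1}(x),…,v^{i−1,n−1}(x), v^{i,n}(x), v^{i+1,n−1}(x),…,v^{m,n−1}(x), σ(x)ᵀ D_x v^{i,n}(x)) } = 0. Define v^i(x) = lim_{n→∞} v^{i,n}(x) (the pointwise increasing limit, which is lower semicontinuous). Then (v^1,…,v^m) is a viscosity supersolution of the system (S). -/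

import Mathlib

/-!
The limit `v^i = sup_n v^{i,n}` of continuous functions is lower semicontinuous. For the
supersolution property take `(q, X) ∈ J^{2,-} v^i (x₀)` and `ε > 0`. Subtracting the quadratic `φ`
with gradient `q` and Hessian `X - 2ε I` at `x₀` leaves `v^i - φ` with a strict minimum at `x₀` on
a closed ball. Since `v^{i,n} - φ` increases to `v^i - φ`, a compactness argument (a substitute
for Dini's theorem, the limit being only lower semicontinuous) shows that minimizers `x_n` of
`v^{i,n} - φ` on the ball tend to `x₀` with `v^{i,n}(x_n) → v^i(x₀)`. So `(Dφ(x_n), X - 2ε I)`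
is a subjet of `v^{i,n}` at `x_n`, where `(S_n)` applies. In the limit the frozen arguments
`v^{j,n-1}` are first bounded below by a fixed level `v^{j,p}`, using that `f_i` is nondecreasing
in `y^j`, and then `p → ∞`; finally `ε → 0`.
-/

open Filter Matrix

noncomputable section

abbrev Vec (n : ℕ) := Fin n → ℝ

/-- Euclidean norm on `Fin n → ℝ`. -/
def eucNorm {n : ℕ} (v : Vec n) : ℝ := Real.sqrt (∑ i, v i ^ 2)

/-- Euclidean inner product. -/
def dotp {n : ℕ} (u v : Vec n) : ℝ := ∑ i, u i * v i

/-- Quadratic form `⟨X v, v⟩`. -/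
def quadForm {n : ℕ} (X : Matrix (Fin n) (Fin n) ℝ) (v : Vec n) : ℝ :=
  ∑ i, ∑ j, X i j * v i * v j

/-- Squared Frobenius norm. -/
def frobSq {n p : ℕ} (A : Matrix (Fin n) (Fin p) ℝ) : ℝ := ∑ i, ∑ j, A i j ^ 2

/-- `(q, X)` belongs to the second-order subjet `J^{2,-} φ (x)`. -/
def InSubjet {n : ℕ} (φ : Vec n → ℝ) (x q : Vec n) (X : Matrix (Fin n) (Fin n) ℝ) : Prop :=
  X.IsSymm ∧ ∀ ε > (0:ℝ), ∀ᶠ y in nhds x,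
    φ x + dotp q (y - x) + (1/2) * quadForm X (y - x) - ε * eucNorm (y - x) ^ 2 ≤ φ y

/-- `(q, X)` belongs to the second-order superjet `J^{2,+} φ (x)`. -/
def InSuperjet {n : ℕ} (φ : Vec n → ℝ) (x q : Vec n) (X : Matrix (Fin n) (Fin n) ℝ) : Prop :=
  X.IsSymm ∧ ∀ ε > (0:ℝ), ∀ᶠ y in nhds x,
    φ y ≤ φ x + dotp q (y - x) + (1/2) * quadForm X (y - x) + ε * eucNorm (y - x) ^ 2

/-- Polynomial growth. -/
def PolyGrowth {n : ℕ} (φ : Vec n → ℝ) : Prop :=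
  ∃ (C : ℝ) (γ : ℕ), ∀ x, |φ x| ≤ C * (1 + eucNorm x ^ γ)

/-- The switching obstacle `max_{j ≠ i} (v^j(x) - g_{ij}(x))`. -/
def obstacle {k m : ℕ} (g : Fin m → Fin m → Vec k → ℝ) (v : Fin m → Vec k → ℝ)
    (i : Fin m) (x : Vec k) : ℝ :=
  ⨆ j : {j : Fin m // j ≠ i}, (v j x - g i j x)

/-- The second order term of the system, evaluated on a jet `(q, X)`. -/
def ham {k d m : ℕ} (r : ℝ) (b : Vec k → Vec k) (σ : Vec k → Matrix (Fin k) (Fin d) ℝ)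
    (f : Fin m → Vec k → (Fin m → ℝ) → Vec d → ℝ) (v : Fin m → Vec k → ℝ)
    (i : Fin m) (x q : Vec k) (X : Matrix (Fin k) (Fin k) ℝ) : ℝ :=
  r * v i x - dotp (b x) q - (1/2) * Matrix.trace (σ x * (σ x)ᵀ * X)
    - f i x (fun j => v j x) ((σ x)ᵀ.mulVec q)

def IsSupersolution {k d m : ℕ} (r : ℝ) (b : Vec k → Vec k)
    (σ : Vec k → Matrix (Fin k) (Fin d) ℝ)
    (f : Fin m → Vec k → (Fin m → ℝ) → Vec d → ℝ)
    (g : Fin m → Fin m → Vec k → ℝ) (v : Fin m → Vec k → ℝ) : Prop :=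
  ∀ (i : Fin m) (x q : Vec k) (X : Matrix (Fin k) (Fin k) ℝ), InSubjet (v i) x q X →
    0 ≤ min (v i x - obstacle g v i x) (ham r b σ f v i x q X)

def IsSubsolution {k d m : ℕ} (r : ℝ) (b : Vec k → Vec k)
    (σ : Vec k → Matrix (Fin k) (Fin d) ℝ)
    (f : Fin m → Vec k → (Fin m → ℝ) → Vec d → ℝ)
    (g : Fin m → Fin m → Vec k → ℝ) (v : Fin m → Vec k → ℝ) : Prop :=
  ∀ (i : Fin m) (x q : Vec k) (X : Matrix (Fin k) (Fin k) ℝ), InSuperjet (v i) x q X →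
    min (v i x - obstacle g v i x) (ham r b σ f v i x q X) ≤ 0

/-- Gradient with respect to the standard basis. -/
def grad {k : ℕ} (φ : Vec k → ℝ) (x : Vec k) : Vec k :=
  fun i => fderiv ℝ φ x (Pi.single i 1)

/-- Hessian matrix with respect to the standard basis. -/
def hess {k : ℕ} (φ : Vec k → ℝ) (x : Vec k) : Matrix (Fin k) (Fin k) ℝ :=
  fun i j => fderiv ℝ (fun y => fderiv ℝ φ y (Pi.single j 1)) x (Pi.single i 1)

/-- The infinitesimal generator `𝓛φ = ½ Tr[σσᵀ D²φ] + b · Dφ`. -/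
def genL {k d : ℕ} (b : Vec k → Vec k) (σ : Vec k → Matrix (Fin k) (Fin d) ℝ)
    (φ : Vec k → ℝ) (x : Vec k) : ℝ :=
  (1/2) * Matrix.trace (σ x * (σ x)ᵀ * hess φ x) + dotp (b x) (grad φ x)

/-- The structural assumptions on the data `b, σ, f, g` that do not involve second
derivatives of the switching costs: Lipschitz continuity and linear growth of the
coefficients, continuity, uniform Lipschitz continuity in `(y,z)` with constant `C`,
polynomial growth and monotonicity of the generators, and nonnegativity, continuity
and polynomial growth of the switching costs. -/
def CoreAssumptions {k d m : ℕ} (b : Vec k → Vec k)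
    (σ : Vec k → Matrix (Fin k) (Fin d) ℝ)
    (f : Fin m → Vec k → (Fin m → ℝ) → Vec d → ℝ)
    (g : Fin m → Fin m → Vec k → ℝ) (C : ℝ) : Prop :=
  (∃ Cb : ℝ, ∀ x y : Vec k, eucNorm (b x - b y) ≤ Cb * eucNorm (x - y) ∧
      Real.sqrt (frobSq (σ x - σ y)) ≤ Cb * eucNorm (x - y)) ∧
  (∃ Cb : ℝ, ∀ x : Vec k, eucNorm (b x) ≤ Cb * (1 + eucNorm x) ∧
      Real.sqrt (frobSq (σ x)) ≤ Cb * (1 + eucNorm x)) ∧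
  (∀ i, Continuous fun p : Vec k × (Fin m → ℝ) × Vec d => f i p.1 p.2.1 p.2.2) ∧
  (∀ i (x : Vec k) (y y' : Fin m → ℝ) (z z' : Vec d),
      |f i x y z - f i x y' z'| ≤ C * (eucNorm (y - y') + eucNorm (z - z'))) ∧
  (∀ i, PolyGrowth fun x => f i x 0 0) ∧
  (∀ i j, j ≠ i → ∀ (x : Vec k) (z : Vec d) (y : Fin m → ℝ) (t t' : ℝ), t ≤ t' →
      f i x (Function.update y j t) z ≤ f i x (Function.update y j t') z) ∧
  (∀ i j x, 0 ≤ g i j x) ∧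
  (∀ i x, g i i x = 0) ∧
  (∀ i j, Continuous (g i j)) ∧
  (∀ i j, PolyGrowth (g i j))

/-- The non-free-loop condition on the switching costs. -/
def NonFreeLoop {k m : ℕ} (g : Fin m → Fin m → Vec k → ℝ) : Prop :=
  ∀ (N : ℕ) (ι : ℕ → Fin m), 2 ≤ N → ι 0 ≠ ι 1 → ι 0 = ι (N - 1) →
    (Finset.image ι (Finset.range N)).card = N - 1 →
    ∀ x : Vec k, 0 < ∑ l ∈ Finset.range (N - 1), g (ι l) (ι (l + 1)) x

/-- The full standing assumptions: the core assumptions, smoothness of the switching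
costs with `𝓛 g_{ij} ≤ 0`, and the non-free-loop condition. -/
def DataAssumptions {k d m : ℕ} (b : Vec k → Vec k)
    (σ : Vec k → Matrix (Fin k) (Fin d) ℝ)
    (f : Fin m → Vec k → (Fin m → ℝ) → Vec d → ℝ)
    (g : Fin m → Fin m → Vec k → ℝ) (C : ℝ) : Prop :=
  CoreAssumptions b σ f g C ∧
  (∀ i j, ContDiff ℝ 2 (g i j)) ∧
  (∀ i j x, genL b σ (g i j) x ≤ 0) ∧
  NonFreeLoop g

lemma abs_apply_le_eucNorm {n : ℕ} (v : Vec n) (i : Fin n) : |v i| ≤ eucNorm v := by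
  rw [eucNorm, ← Real.sqrt_sq_eq_abs]
  exact Real.sqrt_le_sqrt (Finset.single_le_sum (fun j _ => sq_nonneg (v j)) (Finset.mem_univ i))

lemma eucNorm_pos {n : ℕ} {v : Vec n} (hv : v ≠ 0) : 0 < eucNorm v := by
  by_contra hle
  exact hv (funext fun i => abs_nonpos_iff.1 ((abs_apply_le_eucNorm v i).trans (not_lt.1 hle)))

lemma continuous_eucNorm {n : ℕ} : Continuous (eucNorm : Vec n → ℝ) := by
  unfold eucNorm; fun_prop

lemma abs_apply_le_sqrt_frobSq {n p : ℕ} (A : Matrix (Fin n) (Fin p) ℝ) (a : Fin n) (c : Fin p) :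
    |A a c| ≤ Real.sqrt (frobSq A) := by
  rw [frobSq, ← Real.sqrt_sq_eq_abs]
  refine Real.sqrt_le_sqrt ((Finset.single_le_sum (fun j _ => sq_nonneg (A a j))
    (Finset.mem_univ c)).trans ?_)
  exact Finset.single_le_sum (f := fun i => ∑ j, A i j ^ 2)
    (fun i _ => Finset.sum_nonneg fun j _ => sq_nonneg _) (Finset.mem_univ a)

lemma continuous_of_abs_sub_le {n : ℕ} {F : Vec n → ℝ} {L : ℝ}
    (h : ∀ x y, |F x - F y| ≤ L * eucNorm (x - y)) : Continuous F := by
  refine continuous_iff_continuousAt.2 fun x => tendsto_iff_norm_sub_tendsto_zero.2 ?_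
  have hL : Tendsto (fun y => L * eucNorm (y - x)) (nhds x) (nhds 0) := by
    simpa [eucNorm] using ((continuous_eucNorm.comp (continuous_sub_right x)).tendsto x).const_mul L
  exact squeeze_zero (fun _ => norm_nonneg _) (fun y => h y x) hL

lemma dotp_eq_dotProduct {n : ℕ} (u v : Vec n) : dotp u v = u ⬝ᵥ v := rfl

lemma quadForm_eq_dotProduct {n : ℕ} (X : Matrix (Fin n) (Fin n) ℝ) (v : Vec n) :
    quadForm X v = v ⬝ᵥ X *ᵥ v := by
  simp only [quadForm, dotProduct, mulVec, Finset.mul_sum]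
  exact Finset.sum_congr rfl fun i _ => Finset.sum_congr rfl fun j _ => by ring

lemma quadForm_sub_smul_one {n : ℕ} (X : Matrix (Fin n) (Fin n) ℝ) (c : ℝ) (v : Vec n) :
    quadForm (X - c • 1) v = quadForm X v - c * eucNorm v ^ 2 := by
  rw [quadForm_eq_dotProduct, quadForm_eq_dotProduct, eucNorm, Real.sq_sqrt (by positivity),
    sub_mulVec, smul_mulVec, one_mulVec, dotProduct_sub, dotProduct_smul, smul_eq_mul]
  simp [dotProduct, sq]

lemma quadratic_recenter {n : ℕ} {X : Matrix (Fin n) (Fin n) ℝ} (hX : X.IsSymm)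
    (q x₀ x₁ y : Vec n) :
    dotp q (y - x₀) + (1/2) * quadForm X (y - x₀)
      = dotp q (x₁ - x₀) + (1/2) * quadForm X (x₁ - x₀)
        + dotp (q + X *ᵥ (x₁ - x₀)) (y - x₁) + (1/2) * quadForm X (y - x₁) := by
  have hy : y - x₀ = (x₁ - x₀) + (y - x₁) := by abel
  have hcomm : (y - x₁) ⬝ᵥ X *ᵥ (x₁ - x₀) = X *ᵥ (x₁ - x₀) ⬝ᵥ (y - x₁) := by
    rw [dotProduct_comm]
  have hcross : (x₁ - x₀) ⬝ᵥ X *ᵥ (y - x₁) = X *ᵥ (x₁ - x₀) ⬝ᵥ (y - x₁) := by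
    rw [dotProduct_mulVec, ← mulVec_transpose, hX]
  simp only [dotp_eq_dotProduct, quadForm_eq_dotProduct]
  rw [hy, mulVec_add]
  simp only [dotProduct_add, add_dotProduct]
  rw [hcross, hcomm]
  ring

lemma inSubjet_of_isLocalMin {n : ℕ} {ψ : Vec n → ℝ} {X : Matrix (Fin n) (Fin n) ℝ}
    (hX : X.IsSymm) {q x₀ x₁ : Vec n}
    (hmin : IsLocalMin (fun y => ψ y - (dotp q (y - x₀) + (1/2) * quadForm X (y - x₀))) x₁) :
    InSubjet ψ x₁ (q + X *ᵥ (x₁ - x₀)) X := by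
  refine ⟨hX, fun ε hε => Filter.Eventually.mono hmin fun y hy => ?_⟩
  have hrec := quadratic_recenter hX q x₀ x₁ y
  have hnonneg : 0 ≤ ε * eucNorm (y - x₁) ^ 2 := by positivity
  dsimp only at hy
  linarith

lemma InSubjet.eventually_le_sub_quadratic {n : ℕ} {ψ : Vec n → ℝ} {x₀ q : Vec n}
    {X : Matrix (Fin n) (Fin n) ℝ} (h : InSubjet ψ x₀ q X) {ε : ℝ} (hε : 0 < ε) :
    ∀ᶠ y in nhds x₀, ψ x₀ + ε / 2 * eucNorm (y - x₀) ^ 2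
      ≤ ψ y - (dotp q (y - x₀) + (1/2) * quadForm (X - (2 * ε) • 1) (y - x₀)) :=
  (h.2 (ε / 2) (half_pos hε)).mono fun y hy => by rw [quadForm_sub_smul_one]; linarith

section MonotoneLimit

variable {α : Type*} [TopologicalSpace α] {u : ℕ → α → ℝ} {w : α → ℝ}

lemma lowerSemicontinuous_of_monotone_tendsto (hu : ∀ n, Continuous (u n))
    (hmono : ∀ x, Monotone fun n => u n x)
    (hlim : ∀ x, Tendsto (fun n => u n x) atTop (nhds (w x))) : LowerSemicontinuous w := by
  intro x c hc
  obtain ⟨n, hn⟩ := ((hlim x).eventually (eventually_gt_nhds hc)).exists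
  filter_upwards [((hu n).tendsto x).eventually (eventually_gt_nhds hn)] with y hy
  exact hy.trans_le ((hmono y).ge_of_tendsto (hlim y) n)

lemma tendsto_apply_of_monotone_of_tendsto {x₀ : α} {xs : ℕ → α} (hu : ∀ n, Continuous (u n))
    (hmono : ∀ x, Monotone fun n => u n x)
    (hlim : ∀ x, Tendsto (fun n => u n x) atTop (nhds (w x)))
    (hxs : Tendsto xs atTop (nhds x₀)) (hle : ∀ᶠ n in atTop, u n (xs n) ≤ w x₀) :
    Tendsto (fun n => u n (xs n)) atTop (nhds (w x₀)) := by
  refine tendsto_order.2 ⟨fun c hc => ?_, fun c hc => hle.mono fun n hn => hn.trans_lt hc⟩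
  obtain ⟨p, hp⟩ := ((hlim x₀).eventually (eventually_gt_nhds hc)).exists
  filter_upwards [((hu p).tendsto x₀).comp hxs |>.eventually (eventually_gt_nhds hp),
    eventually_ge_atTop p] with n hn hpn
  exact hn.trans_le (hmono _ hpn)

lemma tendsto_of_isMinOn_of_monotone {K : Set α} (hK : IsCompact K) {x₀ : α} (hx₀ : x₀ ∈ K)
    (hu : ∀ n, Continuous (u n)) (hmono : ∀ x, Monotone fun n => u n x)
    (hlim : ∀ x, Tendsto (fun n => u n x) atTop (nhds (w x)))
    (hstrict : ∀ y ∈ K, y ≠ x₀ → w x₀ < w y) {xs : ℕ → α} (hxsK : ∀ n, xs n ∈ K)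
    (hxs : ∀ n, IsMinOn (u n) K (xs n)) : Tendsto xs atTop (nhds x₀) := by
  intro U hU
  obtain ⟨V, hVU, hVo, hx₀V⟩ := mem_nhds_iff.1 hU
  have hcover : K \ V ⊆ ⋃ n, {y | w x₀ < u n y} := fun y hy =>
    Set.mem_iUnion.2 ((hlim y).eventually (eventually_gt_nhds
      (hstrict y hy.1 fun h => hy.2 (h ▸ hx₀V)))).exists
  obtain ⟨N, hN⟩ := (hK.diff hVo).elim_directed_cover _
    (fun n => isOpen_lt continuous_const (hu n)) hcover
    (Monotone.directed_le fun _ _ hnm _ hy => hy.trans_le (hmono _ hnm))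
  refine Filter.mem_map.2 ((eventually_ge_atTop N).mono fun n hn => ?_)
  by_contra hxU
  have hbelow : u n (xs n) ≤ w x₀ :=
    (hxs n hx₀).trans ((hmono x₀).ge_of_tendsto (hlim x₀) n)
  have habove : w x₀ < u N (xs n) := hN ⟨hxsK n, fun h => hxU (hVU h)⟩
  exact (habove.trans_le (hmono _ hn)).not_ge hbelow

lemma exists_isLocalMin_tendsto_of_monotone {K : Set α} (hK : IsCompact K) {x₀ : α}
    (hKx₀ : K ∈ nhds x₀) (hu : ∀ n, Continuous (u n)) (hmono : ∀ x, Monotone fun n => u n x)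
    (hlim : ∀ x, Tendsto (fun n => u n x) atTop (nhds (w x)))
    (hstrict : ∀ y ∈ K, y ≠ x₀ → w x₀ < w y) :
    ∃ xs : ℕ → α, Tendsto xs atTop (nhds x₀) ∧
      Tendsto (fun n => u n (xs n)) atTop (nhds (w x₀)) ∧
      ∀ᶠ n in atTop, IsLocalMin (u n) (xs n) := by
  have hx₀ : x₀ ∈ K := mem_of_mem_nhds hKx₀
  choose xs hxsK hxs using fun n => hK.exists_isMinOn ⟨x₀, hx₀⟩ (hu n).continuousOn
  have hconv := tendsto_of_isMinOn_of_monotone hK hx₀ hu hmono hlim hstrict hxsK hxs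
  refine ⟨xs, hconv, tendsto_apply_of_monotone_of_tendsto hu hmono hlim hconv
    (Eventually.of_forall fun n => (hxs n hx₀).trans ((hmono x₀).ge_of_tendsto (hlim x₀) n)), ?_⟩
  exact (hconv.eventually (eventually_mem_nhds_iff.2 hKx₀)).mono fun n hn => (hxs n).isLocalMin hn

end MonotoneLimit

lemma InSubjet.exists_approx_of_monotone {n : ℕ} {vseq : ℕ → Vec n → ℝ} {v : Vec n → ℝ}
    (hcont : ∀ j, Continuous (vseq j)) (hmono : ∀ x, Monotone fun j => vseq j x)
    (hlim : ∀ x, Tendsto (fun j => vseq j x) atTop (nhds (v x)))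
    {x₀ q : Vec n} {X : Matrix (Fin n) (Fin n) ℝ} (h : InSubjet v x₀ q X) {ε : ℝ} (hε : 0 < ε) :
    ∃ xs qs : ℕ → Vec n, Tendsto xs atTop (nhds x₀) ∧ Tendsto qs atTop (nhds q) ∧
      Tendsto (fun j => vseq j (xs j)) atTop (nhds (v x₀)) ∧
      ∀ᶠ j in atTop, InSubjet (vseq j) (xs j) (qs j) (X - (2 * ε) • 1) := by
  obtain ⟨δ, hδ, hball⟩ :=
    Metric.nhds_basis_closedBall.eventually_iff.1 (h.eventually_le_sub_quadratic hε)
  set X' := X - (2 * ε) • 1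
  have hX' : X'.IsSymm := h.1.sub (Matrix.isSymm_one.smul _)
  set φ : Vec n → ℝ := fun y => dotp q (y - x₀) + (1/2) * quadForm X' (y - x₀)
  have hφ : Continuous φ := by simp only [φ, dotp, quadForm]; fun_prop
  have hφ₀ : φ x₀ = 0 := by simp [φ, dotp, quadForm]
  obtain ⟨xs, hxs, hvxs, hmin⟩ := exists_isLocalMin_tendsto_of_monotone
    (u := fun j y => vseq j y - φ y) (w := fun y => v y - φ y)
    (isCompact_closedBall x₀ δ) (Metric.closedBall_mem_nhds x₀ hδ) (fun j => (hcont j).sub hφ)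
    (fun y _ _ hjj' => sub_le_sub_right (hmono y hjj') _) (fun y => (hlim y).sub_const _)
    (fun y hy hne => by
      have hpos : 0 < ε / 2 * eucNorm (y - x₀) ^ 2 := by
        have := eucNorm_pos (sub_ne_zero.2 hne)
        positivity
      show v x₀ - φ x₀ < v y - φ y
      exact lt_of_lt_of_le (by linarith) (hball hy))
  refine ⟨xs, fun j => q + X' *ᵥ (xs j - x₀), hxs, ?_, ?_,
    hmin.mono fun j hj => inSubjet_of_isLocalMin hX' hj⟩
  · have hcont_q : Continuous fun y => q + X' *ᵥ (y - x₀) := by fun_prop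
    simpa [Function.comp_def] using (hcont_q.tendsto x₀).comp hxs
  · simpa [hφ₀] using hvxs.add ((hφ.tendsto x₀).comp hxs)

lemma le_of_le_of_update_monotone {ι α β : Type*} [Fintype ι] [DecidableEq ι] [Preorder α]
    [Preorder β] {G : (ι → α) → β} (i : ι)
    (hG : ∀ j ≠ i, ∀ (y : ι → α) (t t' : α), t ≤ t' →
      G (Function.update y j t) ≤ G (Function.update y j t'))
    {y y' : ι → α} (hle : y ≤ y') (hi : y i = y' i) : G y ≤ G y' := by
  suffices h : ∀ s : Finset ι, G y ≤ G (s.piecewise y' y) by simpa using h Finset.univ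
  intro s
  induction s using Finset.induction_on with
  | empty => simp
  | insert j s hj ih =>
    rw [Finset.piecewise_insert]
    refine ih.trans ?_
    have hjy : s.piecewise y' y j = y j := Finset.piecewise_eq_of_notMem _ _ _ hj
    by_cases hji : j = i
    · subst hji
      rw [← hi, ← hjy, Function.update_eq_self]
    · calc G (s.piecewise y' y)
          = G (Function.update (s.piecewise y' y) j (s.piecewise y' y j)) := by
            rw [Function.update_eq_self]
        _ ≤ _ := hG j hji _ _ _ (hjy ▸ hle j)

lemma le_obstacle {k m : ℕ} (g : Fin m → Fin m → Vec k → ℝ) (v : Fin m → Vec k → ℝ)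
    {i j : Fin m} (hj : j ≠ i) (x : Vec k) : v j x - g i j x ≤ obstacle g v i x :=
  le_ciSup (f := fun j : {j : Fin m // j ≠ i} => v j x - g i j x) (Set.finite_range _).bddAbove
    ⟨j, hj⟩

lemma obstacle_le_of_tendsto {k m : ℕ} {g : Fin m → Fin m → Vec k → ℝ}
    {vseq : ℕ → Fin m → Vec k → ℝ} {v : Fin m → Vec k → ℝ} {i : Fin m}
    [Nonempty {j : Fin m // j ≠ i}] (hg : ∀ j, Continuous (g i j))
    (hcont : ∀ n j, Continuous (vseq n j)) (hmono : ∀ j x, Monotone fun n => vseq n j x)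
    (hlim : ∀ j x, Tendsto (fun n => vseq n j x) atTop (nhds (v j x)))
    {x₀ : Vec k} {xs : ℕ → Vec k} (hxs : Tendsto xs atTop (nhds x₀))
    (hvxs : Tendsto (fun n => vseq n i (xs n)) atTop (nhds (v i x₀)))
    (h : ∀ᶠ n in atTop, obstacle g (vseq n) i (xs n) ≤ vseq n i (xs n)) :
    obstacle g v i x₀ ≤ v i x₀ := by
  refine ciSup_le fun ⟨j, hj⟩ => le_of_tendsto' ((hlim j x₀).sub_const _) fun p => ?_
  refine le_of_tendsto_of_tendsto ((((hcont p j).sub (hg j)).tendsto x₀).comp hxs) hvxs ?_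
  filter_upwards [h, eventually_ge_atTop p] with n hn hpn
  exact (sub_le_sub_right (hmono j _ hpn) _).trans ((le_obstacle g (vseq n) hj (xs n)).trans hn)

lemma le_of_tendsto_of_frozen {α β ι : Type*} [TopologicalSpace α] [TopologicalSpace β]
    [Fintype ι] [DecidableEq ι] {F : α → (ι → ℝ) → β → ℝ}
    (hF : Continuous fun p : α × (ι → ℝ) × β => F p.1 p.2.1 p.2.2) {i : ι}
    (hFmono : ∀ x z, ∀ j ≠ i, ∀ (y : ι → ℝ) (t t' : ℝ), t ≤ t' →
      F x (Function.update y j t) z ≤ F x (Function.update y j t') z)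
    {vseq : ℕ → ι → α → ℝ} {v : ι → α → ℝ}
    (hcont : ∀ n j, Continuous (vseq n j)) (hmono : ∀ j x, Monotone fun n => vseq n j x)
    (hlim : ∀ j x, Tendsto (fun n => vseq n j x) atTop (nhds (v j x)))
    {x₀ : α} {z₀ : β} {R₀ : ℝ} {xs : ℕ → α} {zs : ℕ → β} {R : ℕ → ℝ}
    (hxs : Tendsto xs atTop (nhds x₀)) (hzs : Tendsto zs atTop (nhds z₀))
    (hR : Tendsto R atTop (nhds R₀))
    (hvxs : Tendsto (fun n => vseq n i (xs n)) atTop (nhds (v i x₀)))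
    (h : ∀ᶠ n in atTop,
      F (xs n) (Function.update (fun l => vseq (n - 1) l (xs n)) i (vseq n i (xs n))) (zs n)
        ≤ R n) :
    F x₀ (fun l => v l x₀) z₀ ≤ R₀ := by
  have hfrozen : ∀ p, F x₀ (Function.update (fun l => vseq p l x₀) i (v i x₀)) z₀ ≤ R₀ := by
    intro p
    have hargs : Tendsto
        (fun n => (xs n, Function.update (fun l => vseq p l (xs n)) i (vseq n i (xs n)), zs n))
        atTop (nhds (x₀, Function.update (fun l => vseq p l x₀) i (v i x₀), z₀)) :=
      hxs.prodMk_nhds (((tendsto_pi_nhds.2 fun l => ((hcont p l).tendsto x₀).comp hxs).update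
        i hvxs).prodMk_nhds hzs)
    refine le_of_tendsto_of_tendsto ((hF.tendsto _).comp hargs) hR ?_
    filter_upwards [h, eventually_ge_atTop (p + 1)] with n hn hpn
    refine (le_of_le_of_update_monotone (G := (F (xs n) · (zs n))) i (hFmono _ _) ?_
      (by simp)).trans hn
    exact update_le_update_iff.2 ⟨le_rfl, fun l _ => hmono l _ (by omega)⟩
  have hupd : Tendsto (fun p => Function.update (fun l => vseq p l x₀) i (v i x₀)) atTop
      (nhds fun l => v l x₀) := by
    simpa using (tendsto_pi_nhds.2 fun l => hlim l x₀).update i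
      (tendsto_const_nhds (x := v i x₀))
  exact le_of_tendsto' ((hF.tendsto _).comp
    (tendsto_const_nhds.prodMk_nhds (hupd.prodMk_nhds tendsto_const_nhds))) hfrozen

lemma CoreAssumptions.continuous_coeffs {k d m : ℕ} {b : Vec k → Vec k}
    {σ : Vec k → Matrix (Fin k) (Fin d) ℝ} {f : Fin m → Vec k → (Fin m → ℝ) → Vec d → ℝ}
    {g : Fin m → Fin m → Vec k → ℝ} {C : ℝ} (h : CoreAssumptions b σ f g C) :
    Continuous b ∧ Continuous σ := by
  obtain ⟨Cb, hLip⟩ := h.1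
  exact ⟨continuous_pi fun a => continuous_of_abs_sub_le fun x y =>
      (abs_apply_le_eucNorm (b x - b y) a).trans (hLip x y).1,
    continuous_pi fun a => continuous_pi fun c => continuous_of_abs_sub_le fun x y =>
      (abs_apply_le_sqrt_frobSq (σ x - σ y) a c).trans (hLip x y).2⟩

theorem statement9_general {k d m : ℕ} (hm : 2 ≤ m)
    (r : ℝ)
    (b : Vec k → Vec k) (σ : Vec k → Matrix (Fin k) (Fin d) ℝ)
    (f : Fin m → Vec k → (Fin m → ℝ) → Vec d → ℝ)
    (g : Fin m → Fin m → Vec k → ℝ) (C : ℝ)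
    (hcore : CoreAssumptions b σ f g C)
    (vseq : ℕ → Fin m → Vec k → ℝ)
    (hcont : ∀ n i, Continuous (vseq n i))
    (hmono : ∀ n i x, vseq n i x ≤ vseq (n + 1) i x)
    (hsupn : ∀ n : ℕ, 1 ≤ n →
      ∀ (i : Fin m) (x q : Vec k) (X : Matrix (Fin k) (Fin k) ℝ),
        InSubjet (vseq n i) x q X →
        0 ≤ min (vseq n i x - obstacle g (vseq n) i x)
          (r * vseq n i x - dotp (b x) q - (1/2) * Matrix.trace (σ x * (σ x)ᵀ * X)
            - f i x (Function.update (fun l => vseq (n - 1) l x) i (vseq n i x))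
                ((σ x)ᵀ.mulVec q)))
    (v : Fin m → Vec k → ℝ)
    (hlim : ∀ i x, Tendsto (fun n => vseq n i x) atTop (nhds (v i x))) :
    (∀ i, LowerSemicontinuous (v i)) ∧ IsSupersolution r b σ f g v := by
  have hmono' : ∀ i x, Monotone fun n => vseq n i x := fun i x =>
    monotone_nat_of_le_succ fun n => hmono n i x
  refine ⟨fun i => lowerSemicontinuous_of_monotone_tendsto (hcont · i) (hmono' i) (hlim i), ?_⟩
  obtain ⟨hb, hσ⟩ := hcore.continuous_coeffs
  obtain ⟨-, -, hfc, -, -, hfmono, -, -, hgc, -⟩ := hcore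
  intro i x₀ q X hjet
  have : Nonempty {j : Fin m // j ≠ i} :=
    (Fintype.exists_ne_of_one_lt_card (by simp; omega) i).elim fun j hj => ⟨⟨j, hj⟩⟩
  -- the linear part of `(S)` at (value, point, gradient), with Hessian `X - 2εI`
  set R : ℝ × Vec k × Vec k × ℝ → ℝ := fun p => r * p.1 - dotp (b p.2.1) p.2.2.1
    - (1/2) * Matrix.trace (σ p.2.1 * (σ p.2.1)ᵀ * (X - (2 * p.2.2.2) • 1))
  have hR : Continuous R := by simp only [R, dotp_eq_dotProduct]; fun_prop
  have hperturbed : ∀ ε > 0, obstacle g v i x₀ ≤ v i x₀ ∧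
      f i x₀ (fun l => v l x₀) ((σ x₀)ᵀ *ᵥ q) ≤ R (v i x₀, x₀, q, ε) := by
    intro ε hε
    obtain ⟨xs, qs, hxs, hqs, hvxs, hjets⟩ :=
      hjet.exists_approx_of_monotone (hcont · i) (hmono' i) (hlim i) hε
    have hsup := (hjets.and (eventually_ge_atTop 1)).mono fun n hn =>
      le_min_iff.1 (hsupn n hn.2 i _ _ _ hn.1)
    have hZ : Continuous fun p : Vec k × Vec k => (σ p.1)ᵀ *ᵥ p.2 := by fun_prop
    refine ⟨obstacle_le_of_tendsto (hgc i) hcont hmono' hlim hxs hvxs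
      (hsup.mono fun n hn => sub_nonneg.1 hn.1), ?_⟩
    exact le_of_tendsto_of_frozen (hfc i) (fun x z j hj => hfmono i j hj x z) hcont hmono' hlim
      hxs ((hZ.tendsto _).comp (hxs.prodMk_nhds hqs))
      ((hR.tendsto _).comp
        (hvxs.prodMk_nhds (hxs.prodMk_nhds (hqs.prodMk_nhds tendsto_const_nhds))))
      hvxs (hsup.mono fun n hn => sub_nonneg.1 hn.2)
  have hε : Tendsto (fun ε => R (v i x₀, x₀, q, ε)) (nhdsWithin 0 (Set.Ioi 0))
      (nhds (R (v i x₀, x₀, q, 0))) :=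
    ((hR.comp (by fun_prop)).tendsto 0).mono_left nhdsWithin_le_nhds
  refine le_min (sub_nonneg.2 (hperturbed 1 one_pos).1) (sub_nonneg.2 ?_)
  simpa [R] using ge_of_tendsto hε (eventually_nhdsWithin_of_forall fun ε hε => (hperturbed ε hε).2)

/-- **Stability of supersolutions under monotone increasing limits.**
If for every `n ≥ 1` the tuple `(v^{1,n},…,v^{m,n})` of continuous functions, increasing
in `n` and uniformly of polynomial growth, is a viscosity supersolution of the decoupled
system `(S_n)` (generator frozen at level `n-1` off the diagonal), then the pointwise
increasing limit `(v^1,…,v^m)` is lower semicontinuous and is a viscosity supersolution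
of the fully coupled system `(S)`. -/
theorem statement9 {k d m : ℕ} (hk : 1 ≤ k) (hd : 1 ≤ d) (hm : 2 ≤ m)
    (r : ℝ) (hr : 0 < r)
    (b : Vec k → Vec k) (σ : Vec k → Matrix (Fin k) (Fin d) ℝ)
    (f : Fin m → Vec k → (Fin m → ℝ) → Vec d → ℝ)
    (g : Fin m → Fin m → Vec k → ℝ) (C : ℝ) (hC : 0 ≤ C)
    (hcore : CoreAssumptions b σ f g C)
    (vseq : ℕ → Fin m → Vec k → ℝ) (Cv : ℝ) (γ : ℕ)
    (hcont : ∀ n i, Continuous (vseq n i))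
    (hmono : ∀ n i x, vseq n i x ≤ vseq (n + 1) i x)
    (hbdd : ∀ n i x, |vseq n i x| ≤ Cv * (1 + eucNorm x ^ γ))
    (hsupn : ∀ n : ℕ, 1 ≤ n →
      ∀ (i : Fin m) (x q : Vec k) (X : Matrix (Fin k) (Fin k) ℝ),
        InSubjet (vseq n i) x q X →
        0 ≤ min (vseq n i x - obstacle g (vseq n) i x)
          (r * vseq n i x - dotp (b x) q - (1/2) * Matrix.trace (σ x * (σ x)ᵀ * X)
            - f i x (Function.update (fun l => vseq (n - 1) l x) i (vseq n i x))
                ((σ x)ᵀ.mulVec q)))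
    (v : Fin m → Vec k → ℝ)
    (hlim : ∀ i x, Tendsto (fun n => vseq n i x) atTop (nhds (v i x))) :
    (∀ i, LowerSemicontinuous (v i)) ∧ IsSupersolution r b σ f g v :=
  statement9_general hm r b σ f g C hcore vseq hcont hmono hsupn v hlim
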